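/- arXiv:1705.08046 — 3 statements merged into one kernel-verified Lean document; each statement's English description precedes it below -/
import Mathlib

section
/- Let (Ω, F, P) be an atomless probability space, X a square-integrable real random variable, and A ∈ F with P(A) > 0. If E[X·1_{A₁}] = E[X·1_{A₂}] for all measurable subsets A₁, A₂ ⊆ A with P(A₁) = P(A₂), then X is P-almost surely constant on A. -/
/-!
Split `A` into `B = {X > c}` and `C = {X < c}` for a level `c`. If both had positive measure,
Sierpiński's theorem on atomless measures would give `B' ⊆ B` and `C' ⊆ C` of the same positive
measure, and then `∫_{B'} X > c μ(B') = c μ(C') > ∫_{C'} X`, against the hypothesis. So for every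
`c`, `X ≤ c` or `X ≥ c` a.e. on `A`; taking for `c` the average of `X` over `A`, the integral of
`X - c` over `A` vanishes while having a sign, so `X = c` a.e. on `A`.
-/

open MeasureTheory

open scoped ENNReal

theorem ENNReal.exists_mem_forall_le_two_mul {S : Set ℝ≥0∞} (hne : S.Nonempty)
    (htop : sSup S ≠ ∞) : ∃ x ∈ S, ∀ y ∈ S, y ≤ 2 * x := by
  rcases eq_or_ne (sSup S) 0 with h0 | h0
  · obtain ⟨x, hx⟩ := hne
    exact ⟨x, hx, fun y hy => (le_sSup hy).trans (by simp [h0])⟩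
  obtain ⟨x, hx, hlt⟩ := lt_sSup_iff.mp (ENNReal.half_lt_self h0 htop)
  refine ⟨x, hx, fun y hy => ?_⟩
  calc y ≤ sSup S := le_sSup hy
    _ = 2 * (sSup S / 2) := (ENNReal.mul_div_cancel two_ne_zero ENNReal.ofNat_ne_top).symm
    _ ≤ 2 * x := by gcongr

namespace MeasureTheory

variable {Ω : Type*} [MeasurableSpace Ω] {μ : Measure Ω}

def Measure.IsAtomless (μ : Measure Ω) : Prop :=
  ∀ s, MeasurableSet s → 0 < μ s → ∃ t ⊆ s, MeasurableSet t ∧ 0 < μ t ∧ μ t < μ s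

theorem exists_subset_forall_measure_le_two_mul (w : Set Ω) {b : ℝ≥0∞} (hb : b ≠ ∞) :
    ∃ u ⊆ w, MeasurableSet u ∧ μ u ≤ b ∧
      ∀ v ⊆ w, MeasurableSet v → μ v ≤ b → μ v ≤ 2 * μ u := by
  obtain ⟨_, ⟨u, ⟨huw, hu, hub⟩, rfl⟩, hmax⟩ := ENNReal.exists_mem_forall_le_two_mul
    (S := μ '' {u | u ⊆ w ∧ MeasurableSet u ∧ μ u ≤ b}) ⟨0, ∅, by simp, measure_empty⟩
    (ne_top_of_le_ne_top hb (sSup_le (by rintro _ ⟨u, ⟨-, -, hub⟩, rfl⟩; exact hub)))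
  exact ⟨u, huw, hu, hub, fun v hvw hv hvb => hmax _ ⟨v, ⟨hvw, hv, hvb⟩, rfl⟩⟩

theorem mul_measureReal_lt_setIntegral {f : Ω → ℝ} {t : Set Ω} {c : ℝ} (ht : MeasurableSet t)
    (ht₀ : 0 < μ t) (ht_top : μ t ≠ ∞) (hf : IntegrableOn f t μ) (hc : ∀ x ∈ t, c < f x) :
    c * μ.real t < ∫ x in t, f x ∂μ := by
  have hfc : IntegrableOn (fun x => f x - c) t μ := hf.sub (integrableOn_const ht_top)
  have hpos : 0 < ∫ x in t, (f x - c) ∂μ := by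
    rw [setIntegral_pos_iff_support_of_nonneg_ae
      ((ae_restrict_iff' ht).2 (.of_forall fun x hx => sub_nonneg.2 (hc x hx).le)) hfc]
    convert ht₀ using 2
    exact Set.inter_eq_right.2 fun x hx => sub_ne_zero.2 (hc x hx).ne'
  rwa [integral_sub hf (integrableOn_const ht_top), setIntegral_const, smul_eq_mul, sub_pos,
    mul_comm] at hpos

theorem setIntegral_lt_mul_measureReal {f : Ω → ℝ} {t : Set Ω} {c : ℝ} (ht : MeasurableSet t)
    (ht₀ : 0 < μ t) (ht_top : μ t ≠ ∞) (hf : IntegrableOn f t μ) (hc : ∀ x ∈ t, f x < c) :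
    ∫ x in t, f x ∂μ < c * μ.real t := by
  have := mul_measureReal_lt_setIntegral ht ht₀ ht_top hf.neg fun x hx => neg_lt_neg (hc x hx)
  rw [Pi.neg_def, integral_neg] at this
  linarith

namespace Measure.IsAtomless

variable [IsFiniteMeasure μ] {s : Set Ω}

theorem exists_subset_two_mul_le (hμ : μ.IsAtomless) (hs : MeasurableSet s) (hs₀ : 0 < μ s) :
    ∃ t ⊆ s, MeasurableSet t ∧ 0 < μ t ∧ 2 * μ t ≤ μ s := by
  obtain ⟨t, hts, ht, ht₀, hlt⟩ := hμ s hs hs₀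
  by_cases h : 2 * μ t ≤ μ s
  · exact ⟨t, hts, ht, ht₀, h⟩
  have hdiff : μ (s \ t) = μ s - μ t := measure_sdiff hts ht.nullMeasurableSet (measure_ne_top μ t)
  refine ⟨s \ t, Set.sdiff_subset, hs.diff ht, hdiff ▸ tsub_pos_of_lt hlt, ?_⟩
  rw [hdiff, ENNReal.mul_sub (fun _ _ => ENNReal.ofNat_ne_top), tsub_le_iff_right, two_mul]
  gcongr
  exact (not_le.mp h).le

theorem exists_subset_measure_lt (hμ : μ.IsAtomless) (hs : MeasurableSet s) (hs₀ : 0 < μ s)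
    {ε : ℝ≥0∞} (hε : 0 < ε) : ∃ t ⊆ s, MeasurableSet t ∧ 0 < μ t ∧ μ t < ε := by
  set D : Set ℝ≥0∞ := μ '' {t | t ⊆ s ∧ MeasurableSet t ∧ 0 < μ t}
  suffices sInf D = 0 by
    obtain ⟨_, ⟨t, ⟨hts, ht, ht₀⟩, rfl⟩, hlt⟩ := sInf_lt_iff.mp (this ▸ hε)
    exact ⟨t, hts, ht, ht₀, hlt⟩
  by_contra hD
  have hDs : sInf D ≤ μ s := sInf_le ⟨s, ⟨subset_rfl, hs, hs₀⟩, rfl⟩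
  obtain ⟨_, ⟨t, ⟨hts, ht, ht₀⟩, rfl⟩, hlt⟩ : ∃ m ∈ D, m < 2 * sInf D :=
    sInf_lt_iff.mp (two_mul (sInf D) ▸ ENNReal.lt_add_right (ne_top_of_le_ne_top
      (measure_ne_top μ s) hDs) hD)
  obtain ⟨u, hut, hu, hu₀, hu2⟩ := exists_subset_two_mul_le hμ ht ht₀
  have hDu : sInf D ≤ μ u := sInf_le ⟨u, ⟨hut.trans hts, hu, hu₀⟩, rfl⟩
  have : 2 * sInf D ≤ μ t := by grw [hDu]; exact hu2
  exact hlt.not_ge this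

theorem exists_subset_measure_eq (hμ : μ.IsAtomless) (hs : MeasurableSet s) {r : ℝ≥0∞}
    (hr : r ≤ μ s) : ∃ t ⊆ s, MeasurableSet t ∧ μ t = r := by
  have hr_top : r ≠ ∞ := ne_top_of_le_ne_top (measure_ne_top μ s) hr
  -- Greedy exhaustion: each step adds at least half of the largest admissible increment. If the
  -- union fell short of `r`, a small `v` would be admissible at every step, so every increment
  -- would have measure at least `μ v / 2`.
  choose u hus hu hur hmax using fun t : Set Ω =>
    exists_subset_forall_measure_le_two_mul (μ := μ) (s \ t) (b := r - μ t) (by finiteness)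
  let T : ℕ → Set Ω := fun n => Nat.rec ∅ (fun _ t => t ∪ u t) n
  have hT_succ : ∀ n, μ (T (n + 1)) = μ (T n) + μ (u (T n)) := fun n =>
    measure_union (Set.disjoint_sdiff_right.mono_right (hus _)) (hu _)
  have hT : ∀ n, T n ⊆ s ∧ MeasurableSet (T n) ∧ μ (T n) ≤ r := by
    intro n
    induction n with
    | zero => simp [T]
    | succ n ih =>
      refine ⟨Set.union_subset ih.1 ((hus _).trans Set.sdiff_subset), ih.2.1.union (hu _), ?_⟩
      rw [hT_succ]
      calc μ (T n) + μ (u (T n)) ≤ μ (T n) + (r - μ (T n)) := by gcongr; exact hur _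
        _ = r := add_tsub_cancel_of_le ih.2.2
  have hT_mono : Monotone T := monotone_nat_of_le_succ fun n => Set.subset_union_left
  set t := ⋃ n, T n
  have ht : MeasurableSet t := .iUnion fun n => (hT n).2.1
  have ht_le : μ t ≤ r := by
    rw [hT_mono.directed_le.measure_iUnion]
    exact iSup_le fun n => (hT n).2.2
  refine ⟨t, Set.iUnion_subset fun n => (hT n).1, ht, ht_le.antisymm (not_lt.mp fun hlt => ?_)⟩
  obtain ⟨v, hvs, hv, hv₀, hvr⟩ := hμ.exists_subset_measure_lt (hs.diff ht)
    (tsub_pos_of_lt (hlt.trans_le hr) |>.trans_le le_measure_sdiff) (tsub_pos_of_lt hlt)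
  have hgain : ∀ n, μ v ≤ 2 * μ (u (T n)) := fun n =>
    hmax _ v (hvs.trans (Set.sdiff_subset_sdiff_right (Set.subset_iUnion T n))) hv
      (hvr.le.trans (tsub_le_tsub_left (measure_mono (Set.subset_iUnion T n)) r))
  have hgrow : ∀ n : ℕ, n * μ v ≤ 2 * μ (T n) := by
    intro n
    induction n with
    | zero => simp
    | succ n ih =>
      rw [hT_succ, mul_add, Nat.cast_succ, add_one_mul]
      exact add_le_add ih (hgain n)
  obtain ⟨n, hn⟩ := ENNReal.exists_nat_mul_gt hv₀.ne' (b := 2 * r) (by finiteness)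
  exact hn.not_ge ((hgrow n).trans (by gcongr; exact (hT n).2.2))

variable {f : Ω → ℝ} {A : Set Ω}

theorem ae_restrict_le_or_ge_of_setIntegral_eq (hμ : μ.IsAtomless) (hf : Measurable f)
    (hfi : IntegrableOn f A μ) (hA : MeasurableSet A)
    (h : ∀ A₁ A₂ : Set Ω, MeasurableSet A₁ → MeasurableSet A₂ → A₁ ⊆ A → A₂ ⊆ A →
      μ A₁ = μ A₂ → ∫ ω in A₁, f ω ∂μ = ∫ ω in A₂, f ω ∂μ) (c : ℝ) :
    (∀ᵐ x ∂μ.restrict A, f x ≤ c) ∨ ∀ᵐ x ∂μ.restrict A, c ≤ f x := by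
  set B := A ∩ {x | c < f x}
  set C := A ∩ {x | f x < c}
  have hB : MeasurableSet B := hA.inter (measurableSet_lt measurable_const hf)
  have hC : MeasurableSet C := hA.inter (measurableSet_lt hf measurable_const)
  suffices μ B = 0 ∨ μ C = 0 by
    rw [ae_restrict_iff' hA, ae_restrict_iff' hA]
    refine this.imp (fun hB₀ => ?_) (fun hC₀ => ?_)
    · filter_upwards [measure_eq_zero_iff_ae_notMem.mp hB₀] with x hx hxA
      exact not_lt.mp fun hlt => hx ⟨hxA, hlt⟩
    · filter_upwards [measure_eq_zero_iff_ae_notMem.mp hC₀] with x hx hxA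
      exact not_lt.mp fun hlt => hx ⟨hxA, hlt⟩
  by_contra! ⟨hB₀, hC₀⟩
  obtain ⟨B', hB'B, hB', C', hC'C, hC', hB'C', hB'₀⟩ : ∃ B' ⊆ B, MeasurableSet B' ∧
      ∃ C' ⊆ C, MeasurableSet C' ∧ μ B' = μ C' ∧ 0 < μ B' := by
    rcases le_total (μ B) (μ C) with hle | hle
    · obtain ⟨C', hC'C, hC', hC'B⟩ := hμ.exists_subset_measure_eq hC hle
      exact ⟨B, subset_rfl, hB, C', hC'C, hC', hC'B.symm, pos_iff_ne_zero.mpr hB₀⟩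
    · obtain ⟨B', hB'B, hB', hB'C⟩ := hμ.exists_subset_measure_eq hB hle
      exact ⟨B', hB'B, hB', C, subset_rfl, hC, hB'C, hB'C ▸ pos_iff_ne_zero.mpr hC₀⟩
  have hBA : B' ⊆ A := hB'B.trans Set.inter_subset_left
  have hCA : C' ⊆ A := hC'C.trans Set.inter_subset_left
  have hlt_B := mul_measureReal_lt_setIntegral hB' hB'₀ (measure_ne_top μ B') (hfi.mono_set hBA)
    fun x hx => (hB'B hx).2
  have hlt_C := setIntegral_lt_mul_measureReal hC' (hB'C' ▸ hB'₀) (measure_ne_top μ C')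
    (hfi.mono_set hCA) fun x hx => (hC'C hx).2
  rw [h B' C' hB' hC' hBA hCA hB'C', measureReal_def, hB'C', ← measureReal_def] at hlt_B
  linarith

theorem ae_restrict_eq_setAverage_of_setIntegral_eq (hμ : μ.IsAtomless)
    (hfi : IntegrableOn f A μ) (hA : MeasurableSet A)
    (h : ∀ A₁ A₂ : Set Ω, MeasurableSet A₁ → MeasurableSet A₂ → A₁ ⊆ A → A₂ ⊆ A →
      μ A₁ = μ A₂ → ∫ ω in A₁, f ω ∂μ = ∫ ω in A₂, f ω ∂μ) :
    ∀ᵐ x ∂μ.restrict A, f x = ⨍ y in A, f y ∂μ := by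
  set g := hfi.1.mk f
  have hfg : f =ᵐ[μ.restrict A] g := hfi.1.ae_eq_mk
  have hgi : IntegrableOn g A μ := hfi.congr_fun_ae hfg
  have hg_int : ∀ A₁ ⊆ A, ∫ ω in A₁, f ω ∂μ = ∫ ω in A₁, g ω ∂μ := fun A₁ hA₁ =>
    integral_congr_ae (ae_restrict_of_ae_restrict_of_subset hA₁ hfg)
  have hg : ∀ A₁ A₂ : Set Ω, MeasurableSet A₁ → MeasurableSet A₂ → A₁ ⊆ A → A₂ ⊆ A →
      μ A₁ = μ A₂ → ∫ ω in A₁, g ω ∂μ = ∫ ω in A₂, g ω ∂μ :=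
    fun A₁ A₂ h₁ h₂ hA₁ hA₂ heq => by
      rw [← hg_int A₁ hA₁, ← hg_int A₂ hA₂, h A₁ A₂ h₁ h₂ hA₁ hA₂ heq]
  set c := ⨍ y in A, g y ∂μ
  have hint : ∫ x in A, g x ∂μ = ∫ _ in A, c ∂μ := (setIntegral_setAverage μ g A).symm
  have hgc : g =ᵐ[μ.restrict A] fun _ => c := by
    rcases hμ.ae_restrict_le_or_ge_of_setIntegral_eq hfi.1.stronglyMeasurable_mk.measurable hgi hA
      hg c with hle | hge
    · exact (integral_eq_iff_of_ae_le hgi (integrable_const c) hle).1 hint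
    · exact ((integral_eq_iff_of_ae_le (integrable_const c) hgi hge).1 hint.symm).symm
  rw [average_congr hfg]
  exact hfg.trans hgc

end Measure.IsAtomless

end MeasureTheory

theorem wasserstein_constancy_lemma_general
    {Ω : Type*} [MeasurableSpace Ω] (μ : Measure Ω) [IsProbabilityMeasure μ]
    (hatomless : ∀ s : Set Ω, MeasurableSet s → 0 < μ s →
      ∃ t ⊆ s, MeasurableSet t ∧ 0 < μ t ∧ μ t < μ s)
    (X : Ω → ℝ) (hX : MemLp X 2 μ)
    (A : Set Ω) (hA : MeasurableSet A)
    (h : ∀ A₁ A₂ : Set Ω, MeasurableSet A₁ → MeasurableSet A₂ → A₁ ⊆ A → A₂ ⊆ A →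
      μ A₁ = μ A₂ → ∫ ω in A₁, X ω ∂μ = ∫ ω in A₂, X ω ∂μ) :
    ∃ c : ℝ, ∀ᵐ ω ∂μ, ω ∈ A → X ω = c :=
  ⟨_, (ae_restrict_iff' hA).mp <| Measure.IsAtomless.ae_restrict_eq_setAverage_of_setIntegral_eq
    hatomless (hX.integrable one_le_two).integrableOn hA h⟩

/-- Constancy lemma: on an atomless probability space, if the integral of a square-integrable
random variable `X` over subsets of `A` depends only on their measure, then `X` is a.s.
constant on `A`. -/
theorem wasserstein_constancy_lemma
    {Ω : Type*} [MeasurableSpace Ω] (μ : Measure Ω) [IsProbabilityMeasure μ]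
    (hatomless : ∀ s : Set Ω, MeasurableSet s → 0 < μ s →
      ∃ t ⊆ s, MeasurableSet t ∧ 0 < μ t ∧ μ t < μ s)
    (X : Ω → ℝ) (hX : MemLp X 2 μ)
    (A : Set Ω) (hA : MeasurableSet A) (hApos : 0 < μ A)
    (h : ∀ A₁ A₂ : Set Ω, MeasurableSet A₁ → MeasurableSet A₂ → A₁ ⊆ A → A₂ ⊆ A →
      μ A₁ = μ A₂ → ∫ ω in A₁, X ω ∂μ = ∫ ω in A₂, X ω ∂μ) :
    ∃ c : ℝ, ∀ᵐ ω ∂μ, ω ∈ A → X ω = c :=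
  wasserstein_constancy_lemma_general μ hatomless X hX A hA h
end

section
/- Let (Ω, F, P) be atomless, ξ ∈ L²(Ω, ℝ) a discrete random variable with P(ξ = x_i) = p_i for distinct values x_i, and let F : L²(Ω, ℝ) → ℝ be law-invariant and Fréchet differentiable at ξ with gradient DF(ξ) ∈ L²(Ω, ℝ). Then for each i, DF(ξ) is P-almost surely constant on the event {ξ = x_i}. Consequently DF(ξ) = g(ξ) a.s. for a deterministic function g defined on the values {x_i}. -/
/-!
Perturbing `ξ` by `ε • 1_B`, for `B` inside a level set `{ξ = a}`, changes its law only through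
`μ B`. By law invariance the directional derivatives along `1_B` and `1_C` therefore agree when
`μ B = μ C`, that is, `∫_B DF = ∫_C DF`. On an atomless space any two non-null sets contain
subsets of the same positive measure (Sierpiński), so `DF` cannot take values `< q` and `≥ q` on
non-null parts of one level set: the first part would have the smaller integral. Hence `DF` is
a.e. constant on each level set, and `g` sends each value of `ξ` to the constant on its level set.
-/

open MeasureTheory Filter Topology Set
open scoped ENNReal

namespace MeasureTheory.Measure

variable {Ω : Type*} [MeasurableSpace Ω] {μ : Measure Ω} {s : Set Ω}

/-- Not Mathlib's `NoAtoms`, which only asks singletons to be null. -/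
def Atomless (μ : Measure Ω) : Prop :=
  ∀ s, MeasurableSet s → 0 < μ s → ∃ t ⊆ s, MeasurableSet t ∧ 0 < μ t ∧ μ t < μ s

variable [IsFiniteMeasure μ]

theorem Atomless.exists_subset_measure_pos_le_half (hμ : μ.Atomless) (hs : MeasurableSet s)
    (h0 : 0 < μ s) : ∃ t ⊆ s, MeasurableSet t ∧ 0 < μ t ∧ μ t ≤ μ s / 2 := by
  obtain ⟨t, hts, htm, ht0, hlt⟩ := hμ s hs h0
  have hsplit : μ (s \ t) = μ s - μ t :=
    measure_sdiff hts htm.nullMeasurableSet (measure_ne_top μ t)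
  rcases le_or_gt (μ t) (μ s / 2) with hle | hgt
  · exact ⟨t, hts, htm, ht0, hle⟩
  · refine ⟨s \ t, sdiff_subset, hs.diff htm, hsplit ▸ tsub_pos_of_lt hlt, ?_⟩
    calc μ (s \ t) = μ s - μ t := hsplit
      _ ≤ μ s - μ s / 2 := tsub_le_tsub_left hgt.le _
      _ = μ s / 2 := ENNReal.sub_half (measure_ne_top μ s)

theorem Atomless.exists_subset_measure_pos_le (hμ : μ.Atomless) (hs : MeasurableSet s)
    (h0 : 0 < μ s) {δ : ℝ≥0∞} (hδ : 0 < δ) : ∃ t ⊆ s, MeasurableSet t ∧ 0 < μ t ∧ μ t ≤ δ := by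
  have halving : ∀ n : ℕ, ∃ t ⊆ s, MeasurableSet t ∧ 0 < μ t ∧ μ t ≤ μ s * 2⁻¹ ^ n := by
    intro n
    induction n with
    | zero => exact ⟨s, subset_rfl, hs, h0, by simp⟩
    | succ n ih =>
      obtain ⟨t, hts, htm, ht0, htle⟩ := ih
      obtain ⟨u, hut, hum, hu0, hule⟩ := hμ.exists_subset_measure_pos_le_half htm ht0
      refine ⟨u, hut.trans hts, hum, hu0, hule.trans ?_⟩
      rw [pow_succ, ← mul_assoc, ← div_eq_mul_inv]
      gcongr
  obtain ⟨n, hn⟩ := ENNReal.exists_inv_two_pow_lt (ENNReal.div_pos hδ.ne' (measure_ne_top μ s)).ne'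
  obtain ⟨t, hts, htm, ht0, htle⟩ := halving n
  exact ⟨t, hts, htm, ht0, htle.trans ((mul_le_mul_right hn.le _).trans ENNReal.mul_div_le)⟩

theorem exists_subset_measure_le_half_maximal (t : Set Ω) (m : ℝ≥0∞) :
    ∃ u ⊆ t, MeasurableSet u ∧ μ u ≤ m ∧
      ∀ v ⊆ t, MeasurableSet v → μ v ≤ m → μ v ≤ 2 * μ u := by
  let admissible : Set (Set Ω) := {v | v ⊆ t ∧ MeasurableSet v ∧ μ v ≤ m}
  let room := ⨆ v ∈ admissible, μ v
  rcases eq_or_ne room 0 with h | h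
  · refine ⟨∅, empty_subset _, .empty, by simp, fun v hvs hvm hvle => ?_⟩
    exact (le_biSup μ (show v ∈ admissible from ⟨hvs, hvm, hvle⟩)).trans (h.trans_le zero_le)
  have hfin : room ≠ ∞ := ne_top_of_le_ne_top (measure_ne_top μ univ)
    (iSup₂_le fun v _ => measure_mono (subset_univ v))
  obtain ⟨u, ⟨hus, hum, hu⟩, hlt⟩ := lt_biSup_iff.1 (ENNReal.half_lt_self h hfin)
  refine ⟨u, hus, hum, hu, fun v hvs hvm hvle => ?_⟩
  rw [mul_comm]
  exact (le_biSup μ (show v ∈ admissible from ⟨hvs, hvm, hvle⟩)).trans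
    ((ENNReal.div_le_iff_le_mul (.inl two_ne_zero) (.inl ENNReal.ofNat_ne_top)).1 hlt.le)

theorem exists_maximal_subset_measure_le (r : ℝ≥0∞) :
    ∃ t ⊆ s, MeasurableSet t ∧ μ t ≤ r ∧
      ∀ v ⊆ s \ t, MeasurableSet v → μ t + μ v ≤ r → μ v = 0 := by
  -- Greedily enlarge `t` inside `s`, each time by at least half of the largest admissible amount.
  have hstep : ∀ t : Set Ω, ∃ u ⊆ s \ t, MeasurableSet u ∧ μ u ≤ r - μ t ∧
      ∀ v ⊆ s \ t, MeasurableSet v → μ v ≤ r - μ t → μ v ≤ 2 * μ u :=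
    fun t => exists_subset_measure_le_half_maximal _ _
  choose u hus hum hur hmax using hstep
  let t : ℕ → Set Ω := fun n => Nat.rec ∅ (fun _ t => t ∪ u t) n
  have ht_succ : ∀ n, t (n + 1) = t n ∪ u (t n) := fun _ => rfl
  have hdisj : ∀ n, Disjoint (t n) (u (t n)) := fun n =>
    disjoint_of_subset_right (hus (t n)) disjoint_sdiff_right
  have ht : ∀ n, MeasurableSet (t n) ∧ t n ⊆ s ∧ μ (t n) ≤ r := by
    intro n
    induction n with
    | zero => simp [t]
    | succ n ih =>
      rw [ht_succ, measure_union (hdisj n) (hum _)]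
      exact ⟨ih.1.union (hum _), union_subset ih.2.1 ((hus _).trans sdiff_subset),
        (add_le_add le_rfl (hur _)).trans_eq (add_tsub_cancel_of_le ih.2.2)⟩
  have hmono : Monotone t := monotone_nat_of_le_succ fun n => subset_union_left
  refine ⟨⋃ n, t n, iUnion_subset fun n => (ht n).2.1, .iUnion fun n => (ht n).1,
    hmono.measure_iUnion ▸ iSup_le fun n => (ht n).2.2, fun v hvs hvm hvr => ?_⟩
  -- A set that still fits leaves room at least `μ v` at every stage, so `t n` grows linearly.
  have hv : ∀ n, μ v ≤ 2 * μ (u (t n)) := fun n =>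
    hmax _ v (hvs.trans (sdiff_subset_sdiff_right (subset_iUnion t n))) hvm
      (ENNReal.le_sub_of_add_le_left (measure_ne_top μ _)
        ((add_le_add (measure_mono (subset_iUnion t n)) le_rfl).trans hvr))
  have hgrowth : ∀ n : ℕ, n * μ v ≤ 2 * μ s := by
    suffices ∀ n : ℕ, n * μ v ≤ 2 * μ (t n) from
      fun n => (this n).trans (by gcongr; exact (ht n).2.1)
    intro n
    induction n with
    | zero => simp
    | succ n ih =>
      rw [ht_succ, measure_union (hdisj n) (hum _), Nat.cast_succ, add_mul, one_mul, mul_add]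
      gcongr
      exact hv n
  by_contra hv0
  obtain ⟨n, hn⟩ := ENNReal.exists_nat_mul_gt hv0 (by finiteness : 2 * μ s ≠ ∞)
  exact (hgrowth n).not_gt hn

/-- Sierpiński's theorem. -/
theorem Atomless.exists_subset_measure_eq (hμ : μ.Atomless) (hs : MeasurableSet s)
    {r : ℝ≥0∞} (hr : r ≤ μ s) : ∃ t ⊆ s, MeasurableSet t ∧ μ t = r := by
  obtain ⟨t, hts, htm, htr, hmax⟩ := exists_maximal_subset_measure_le (μ := μ) (s := s) r
  refine ⟨t, hts, htm, le_antisymm htr (not_lt.1 fun hlt => ?_)⟩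
  obtain ⟨v, hvs, hvm, hv0, hvr⟩ := hμ.exists_subset_measure_pos_le (hs.diff htm)
    ((tsub_pos_of_lt (hlt.trans_le hr)).trans_le le_measure_sdiff) (tsub_pos_of_lt hlt)
  exact hv0.ne' (hmax v hvs hvm ((add_le_add le_rfl hvr).trans_eq (add_tsub_cancel_of_le htr)))

theorem Atomless.exists_subsets_measure_eq (hμ : μ.Atomless) {t : Set Ω} (hs : MeasurableSet s)
    (ht : MeasurableSet t) (hs0 : 0 < μ s) (ht0 : 0 < μ t) :
    ∃ B ⊆ s, ∃ C ⊆ t, MeasurableSet B ∧ MeasurableSet C ∧ 0 < μ B ∧ μ B = μ C := by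
  obtain ⟨B, hBs, hBm, hB⟩ := hμ.exists_subset_measure_eq hs (min_le_left (μ s) (μ t))
  obtain ⟨C, hCt, hCm, hC⟩ := hμ.exists_subset_measure_eq ht (min_le_right (μ s) (μ t))
  exact ⟨B, hBs, C, hCt, hBm, hCm, hB ▸ lt_min hs0 ht0, hB.trans hC.symm⟩

variable {A : Set Ω} {f : Ω → ℝ}

theorem Atomless.ae_restrict_lt_or_ge_of_setIntegral_eq (hμ : μ.Atomless) (hA : MeasurableSet A)
    (hfm : Measurable f) (hf : IntegrableOn f A μ)
    (hfA : ∀ B ⊆ A, ∀ C ⊆ A, MeasurableSet B → MeasurableSet C → μ B = μ C →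
      ∫ ω in B, f ω ∂μ = ∫ ω in C, f ω ∂μ) (q : ℝ) :
    (∀ᵐ ω ∂μ.restrict A, f ω < q) ∨ ∀ᵐ ω ∂μ.restrict A, ¬f ω < q := by
  rw [or_iff_not_imp_left, ae_iff, ae_iff]
  simp only [not_lt, not_le]
  intro hge
  by_contra hlt
  rw [Measure.restrict_apply (measurableSet_le measurable_const hfm)] at hge
  rw [Measure.restrict_apply (measurableSet_lt hfm measurable_const)] at hlt
  obtain ⟨B, hB, C, hC, hBm, hCm, hB0, hBC⟩ := hμ.exists_subsets_measure_eq
    ((measurableSet_lt hfm measurable_const).inter hA)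
    ((measurableSet_le measurable_const hfm).inter hA)
    (pos_iff_ne_zero.2 hlt) (pos_iff_ne_zero.2 hge)
  have hBA : B ⊆ A := hB.trans inter_subset_right
  have hCA : C ⊆ A := hC.trans inter_subset_right
  have hgapB : 0 < ∫ ω in B, (q - f ω) ∂μ := by
    refine (setIntegral_pos_iff_support_of_nonneg_ae ?_ ?_).2 ?_
    · exact (ae_restrict_iff' hBm).2 (ae_of_all _ fun ω hω => sub_nonneg.2 (hB hω).1.le)
    · exact (integrable_const q).sub (hf.mono_set hBA)
    · exact hB0.trans_le (measure_mono fun ω hω => ⟨sub_ne_zero.2 (hB hω).1.ne', hω⟩)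
  have hgapC : ∫ ω in C, (q - f ω) ∂μ ≤ 0 :=
    setIntegral_nonpos hCm fun ω hω => sub_nonpos.2 (hC hω).1
  have hgap_eq : ∫ ω in B, (q - f ω) ∂μ = ∫ ω in C, (q - f ω) ∂μ := by
    rw [integral_sub (integrable_const q) (hf.mono_set hBA),
      integral_sub (integrable_const q) (hf.mono_set hCA),
      setIntegral_const, setIntegral_const, measureReal_def, measureReal_def, hBC,
      hfA B hBA C hCA hBm hCm hBC]
  linarith

theorem Atomless.exists_ae_restrict_eq_const_of_setIntegral_eq (hμ : μ.Atomless)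
    (hA : MeasurableSet A) (hf : IntegrableOn f A μ)
    (hfA : ∀ B ⊆ A, ∀ C ⊆ A, MeasurableSet B → MeasurableSet C → μ B = μ C →
      ∫ ω in B, f ω ∂μ = ∫ ω in C, f ω ∂μ) :
    ∃ c, f =ᵐ[μ.restrict A] fun _ => c := by
  obtain ⟨g, hgm, hfg⟩ := hf.aestronglyMeasurable
  have hgA : ∀ B ⊆ A, ∀ C ⊆ A, MeasurableSet B → MeasurableSet C → μ B = μ C →
      ∫ ω in B, g ω ∂μ = ∫ ω in C, g ω ∂μ := fun B hBA C hCA hB hC hBC => by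
    rw [← integral_congr_ae (ae_restrict_of_ae_restrict_of_subset hBA hfg),
      ← integral_congr_ae (ae_restrict_of_ae_restrict_of_subset hCA hfg), hfA B hBA C hCA hB hC hBC]
  obtain ⟨c, hc⟩ := exists_eventuallyEq_const_of_forall_separating (l := ae (μ.restrict A)) (f := g)
    (· ∈ range (Iio : ℝ → Set ℝ)) <| by
      rintro _ ⟨q, rfl⟩
      exact hμ.ae_restrict_lt_or_ge_of_setIntegral_eq hA hgm.measurable (hf.congr hfg) hgA q
  exact ⟨c, hfg.trans hc⟩

end MeasureTheory.Measure

section Perturbation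

variable {Ω : Type*} [MeasurableSpace Ω] {μ : Measure Ω} {ξ : Ω → ℝ} {a : ℝ} {B C : Set Ω}

theorem measure_preimage_add_smul_indicator (hB : MeasurableSet B)
    (hBa : B ⊆ ξ ⁻¹' {a}) (hBfin : μ B ≠ ∞) (ε : ℝ) (S : Set ℝ) :
    μ ((ξ + ε • B.indicator 1) ⁻¹' S)
      = μ (ξ ⁻¹' S) - S.indicator (fun _ => μ B) a + S.indicator (fun _ => μ B) (a + ε) := by
  have hξB : ∀ ω ∈ B, ξ ω = a := hBa
  have hpre : (ξ + ε • B.indicator 1) ⁻¹' S = ξ ⁻¹' S \ B ∪ B ∩ {_ω | a + ε ∈ S} := by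
    ext ω
    by_cases hω : ω ∈ B
    · simp [hω, hξB ω hω]
    · simp [hω]
  have hdiff : μ (ξ ⁻¹' S \ B) = μ (ξ ⁻¹' S) - S.indicator (fun _ => μ B) a := by
    by_cases ha : a ∈ S
    · rw [indicator_of_mem ha, measure_sdiff (fun ω hω => by simp [hξB ω hω, ha])
        hB.nullMeasurableSet hBfin]
    · rw [indicator_of_notMem ha, tsub_zero, sdiff_eq_left.2]
      exact disjoint_left.2 fun ω hω hωB => ha (by simpa [hξB ω hωB] using hω)
  rw [hpre, measure_union (disjoint_left.2 fun ω hω hω' => hω.2 hω'.1)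
    (hB.inter (.const _)), hdiff]
  by_cases hε : a + ε ∈ S <;> simp [hε]

theorem map_add_smul_indicator_eq_of_measure_eq [IsFiniteMeasure μ] (hξ : Measurable ξ)
    (hB : MeasurableSet B) (hC : MeasurableSet C) (hBa : B ⊆ ξ ⁻¹' {a}) (hCa : C ⊆ ξ ⁻¹' {a})
    (hBC : μ B = μ C) (ε : ℝ) :
    μ.map (ξ + ε • B.indicator 1) = μ.map (ξ + ε • C.indicator 1) := by
  ext S hS
  rw [Measure.map_apply (by fun_prop) hS, Measure.map_apply (by fun_prop) hS,
    measure_preimage_add_smul_indicator hB hBa (measure_ne_top μ B),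
    measure_preimage_add_smul_indicator hC hCa (measure_ne_top μ C), hBC]

end Perturbation

section LawInvariant

variable {Ω : Type*} [MeasurableSpace Ω] {μ : Measure Ω}

def LawInvariant (μ : Measure Ω) (F : (Ω → ℝ) → ℝ) : Prop :=
  ∀ ζ ζ' : Ω → ℝ, MemLp ζ 2 μ → MemLp ζ' 2 μ → μ.map ζ = μ.map ζ' → F ζ = F ζ'

def HasGateauxGradientAt (μ : Measure Ω) (F : (Ω → ℝ) → ℝ) (ξ DF : Ω → ℝ) : Prop :=
  ∀ η : Ω → ℝ, MemLp η 2 μ →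
    Tendsto (fun ε : ℝ => (F (ξ + ε • η) - F ξ) / ε) (𝓝[≠] 0) (𝓝 (∫ ω, DF ω * η ω ∂μ))

theorem LawInvariant.setIntegral_gradient_eq [IsFiniteMeasure μ] {F : (Ω → ℝ) → ℝ}
    {ξ DF : Ω → ℝ} {a : ℝ} {B C : Set Ω} (hF : LawInvariant μ F)
    (hDF : HasGateauxGradientAt μ F ξ DF) (hξ : MemLp ξ 2 μ) (hξm : Measurable ξ)
    (hB : MeasurableSet B) (hC : MeasurableSet C) (hBa : B ⊆ ξ ⁻¹' {a}) (hCa : C ⊆ ξ ⁻¹' {a})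
    (hBC : μ B = μ C) : ∫ ω in B, DF ω ∂μ = ∫ ω in C, DF ω ∂μ := by
  have hmem : ∀ {D : Set Ω}, MeasurableSet D → MemLp (D.indicator (1 : Ω → ℝ)) 2 μ := fun hD =>
    memLp_indicator_const 2 hD (1 : ℝ) (.inr (measure_ne_top μ _))
  have hpair : ∀ {D : Set Ω}, MeasurableSet D →
      ∫ ω, DF ω * D.indicator 1 ω ∂μ = ∫ ω in D, DF ω ∂μ := fun {D} hD => by
    rw [← integral_indicator hD]
    congr 1 with ω
    by_cases hω : ω ∈ D <;> simp [hω]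
  have hFeq : (fun ε : ℝ => (F (ξ + ε • B.indicator 1) - F ξ) / ε)
      = fun ε : ℝ => (F (ξ + ε • C.indicator 1) - F ξ) / ε := by
    ext ε
    rw [hF _ _ (hξ.add ((hmem hB).const_smul ε)) (hξ.add ((hmem hC).const_smul ε))
      (map_add_smul_indicator_eq_of_measure_eq hξm hB hC hBa hCa hBC ε)]
  rw [← hpair hB, ← hpair hC]
  exact tendsto_nhds_unique (hFeq ▸ hDF _ (hmem hB)) (hDF _ (hmem hC))

end LawInvariant

theorem frechet_gradient_constant_on_level_sets_general
    {Ω : Type*} [MeasurableSpace Ω] (μ : Measure Ω) [IsProbabilityMeasure μ]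
    (hatomless : ∀ s : Set Ω, MeasurableSet s → 0 < μ s →
      ∃ t ⊆ s, MeasurableSet t ∧ 0 < μ t ∧ μ t < μ s)
    (ξ : Ω → ℝ) (hξ : MemLp ξ 2 μ) (hξm : Measurable ξ)
    (x : ℕ → ℝ)
    (hdiscrete : ∀ᵐ ω ∂μ, ∃ i, ξ ω = x i)
    (F : (Ω → ℝ) → ℝ)
    (hlaw : ∀ ζ ζ' : Ω → ℝ, MemLp ζ 2 μ → MemLp ζ' 2 μ →
      Measure.map ζ μ = Measure.map ζ' μ → F ζ = F ζ')
    (DFξ : Ω → ℝ) (hDFξ : MemLp DFξ 2 μ)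
    (hdiff : ∀ η : Ω → ℝ, MemLp η 2 μ →
      Tendsto (fun ε : ℝ => (F (ξ + ε • η) - F ξ) / ε) (𝓝[≠] 0)
        (𝓝 (∫ ω, DFξ ω * η ω ∂μ))) :
    (∀ i : ℕ, ∃ c : ℝ, ∀ᵐ ω ∂μ, ξ ω = x i → DFξ ω = c) ∧
    ∃ g : ℝ → ℝ, ∀ᵐ ω ∂μ, DFξ ω = g (ξ ω) := by
  have hμ : μ.Atomless := hatomless
  have hF : LawInvariant μ F := hlaw
  have hDF : HasGateauxGradientAt μ F ξ DFξ := hdiff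
  have hconst : ∀ i, ∃ c : ℝ, ∀ᵐ ω ∂μ, ξ ω = x i → DFξ ω = c := fun i => by
    have hlevel : MeasurableSet (ξ ⁻¹' {x i}) := hξm (measurableSet_singleton (x i))
    obtain ⟨c, hc⟩ := hμ.exists_ae_restrict_eq_const_of_setIntegral_eq hlevel
      (hDFξ.integrable one_le_two).integrableOn fun B hB C hC hBm hCm hBC =>
        hF.setIntegral_gradient_eq hDF hξ hξm hBm hCm hB hC hBC
    exact ⟨c, (ae_restrict_iff' hlevel).1 hc⟩
  refine ⟨hconst, ?_⟩
  choose c hc using hconst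
  refine ⟨c ∘ Function.invFun x, ?_⟩
  filter_upwards [ae_all_iff.2 hc, hdiscrete] with ω hω ⟨i, hi⟩
  exact hω _ (Function.invFun_eq ⟨i, hi.symm⟩).symm

/-- For a discrete random variable `ξ` and a law-invariant, Fréchet differentiable `F`,
the gradient `DF(ξ)` is a.s. constant on each level set `{ξ = x i}`, and hence
`DF(ξ) = g(ξ)` a.s. for a deterministic function `g`. -/
theorem frechet_gradient_constant_on_level_sets
    {Ω : Type*} [MeasurableSpace Ω] (μ : Measure Ω) [IsProbabilityMeasure μ]
    (hatomless : ∀ s : Set Ω, MeasurableSet s → 0 < μ s →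
      ∃ t ⊆ s, MeasurableSet t ∧ 0 < μ t ∧ μ t < μ s)
    (ξ : Ω → ℝ) (hξ : MemLp ξ 2 μ) (hξm : Measurable ξ)
    (x : ℕ → ℝ) (hx : Function.Injective x)
    (p : ℕ → ℝ≥0∞) (hp : ∀ i, μ {ω | ξ ω = x i} = p i)
    (hdiscrete : ∀ᵐ ω ∂μ, ∃ i, ξ ω = x i)
    (F : (Ω → ℝ) → ℝ)
    (hlaw : ∀ ζ ζ' : Ω → ℝ, MemLp ζ 2 μ → MemLp ζ' 2 μ →
      Measure.map ζ μ = Measure.map ζ' μ → F ζ = F ζ')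
    (DFξ : Ω → ℝ) (hDFξ : MemLp DFξ 2 μ)
    (hdiff : ∀ η : Ω → ℝ, MemLp η 2 μ →
      Tendsto (fun ε : ℝ => (F (ξ + ε • η) - F ξ) / ε) (𝓝[≠] 0)
        (𝓝 (∫ ω, DFξ ω * η ω ∂μ))) :
    (∀ i : ℕ, ∃ c : ℝ, ∀ᵐ ω ∂μ, ξ ω = x i → DFξ ω = c) ∧
    ∃ g : ℝ → ℝ, ∀ᵐ ω ∂μ, DFξ ω = g (ξ ω) :=
  frechet_gradient_constant_on_level_sets_general μ hatomless ξ hξ hξm x hdiscrete F hlaw DFξ hDFξ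
    hdiff
end

section
/- Let ξ be a discrete random variable with P(ξ = x_i) = p_i > 0 on an atomless probability space, and let F : L²(Ω, ℝ) → ℝ be law-invariant and Fréchet differentiable at ξ. Then for any measurable A₁ ⊆ {ξ = x_i}, the quantity E[DF(ξ)·1_{A₁}] depends only on P(A₁): if A₁, A₂ ⊆ {ξ = x_i} with P(A₁) = P(A₂), then E[DF(ξ)·1_{A₁}] = E[DF(ξ)·1_{A₂}]. -/
open MeasureTheory Filter Topology
open scoped ENNReal

/-!
If `A ⊆ {ξ = c}`, the perturbation `ξ + ε • 1_A` moves the mass `μ A` from `c` to `c + ε` and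
leaves `ξ` unchanged off `A`, so its law is determined by the law of `ξ`, by `c`, `ε` and `μ A`.
Law invariance then gives `F (ξ + ε • 1_{A₁}) = F (ξ + ε • 1_{A₂})` for every `ε`, so the two
difference quotients defining `∫ DF(ξ) • 1_{Aⱼ}` have the same limit.
-/

namespace MeasureTheory.Measure

variable {Ω E : Type*} [MeasurableSpace Ω] [MeasurableSpace E] {μ : Measure Ω} {A : Set Ω}
  {f g : Ω → E} {a b : E}

lemma map_eq_smul_dirac_add_map_restrict_compl (hA : MeasurableSet A)
    (hfA : Set.EqOn f (fun _ ↦ a) A) (hf : AEMeasurable f (μ.restrict Aᶜ)) :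
    μ.map f = μ A • dirac a + (μ.restrict Aᶜ).map f := by
  have hfA' : f =ᵐ[μ.restrict A] fun _ ↦ a := hfA.aeEq_restrict hA
  conv_lhs => rw [← restrict_add_restrict_compl (μ := μ) hA]
  rw [(aemeasurable_const.congr hfA'.symm).map_add₀ hf, map_congr hfA', map_const,
    restrict_apply_univ]

lemma map_add_smul_dirac_eq_of_eqOn (hA : MeasurableSet A) (hf : AEMeasurable f μ)
    (hfA : Set.EqOn f (fun _ ↦ a) A) (hgA : Set.EqOn g (fun _ ↦ b) A) (hgAc : Set.EqOn g f Aᶜ) :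
    μ.map g + μ A • dirac a = μ.map f + μ A • dirac b := by
  have hgf : g =ᵐ[μ.restrict Aᶜ] f := hgAc.aeEq_restrict hA.compl
  rw [map_eq_smul_dirac_add_map_restrict_compl hA hgA (hf.restrict.congr hgf.symm),
    map_eq_smul_dirac_add_map_restrict_compl hA hfA hf.restrict, map_congr hgf]
  abel

lemma map_eq_map_of_eqOn_of_measure_eq [IsFiniteMeasure μ] {A₁ A₂ : Set Ω} {g₁ g₂ : Ω → E}
    (hA₁ : MeasurableSet A₁) (hA₂ : MeasurableSet A₂) (hf : AEMeasurable f μ)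
    (hfA₁ : Set.EqOn f (fun _ ↦ a) A₁) (hfA₂ : Set.EqOn f (fun _ ↦ a) A₂)
    (hg₁A : Set.EqOn g₁ (fun _ ↦ b) A₁) (hg₂A : Set.EqOn g₂ (fun _ ↦ b) A₂)
    (hg₁Ac : Set.EqOn g₁ f A₁ᶜ) (hg₂Ac : Set.EqOn g₂ f A₂ᶜ) (hμA : μ A₁ = μ A₂) :
    μ.map g₁ = μ.map g₂ := by
  have h := map_add_smul_dirac_eq_of_eqOn hA₁ hf hfA₁ hg₁A hg₁Ac
  rw [hμA, ← map_add_smul_dirac_eq_of_eqOn hA₂ hf hfA₂ hg₂A hg₂Ac] at h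
  ext B hB
  have hB := congrArg (· B) h
  simp only [coe_add, coe_smul, Pi.add_apply, Pi.smul_apply] at hB
  exact (ENNReal.add_left_inj
    (ENNReal.mul_ne_top (measure_ne_top μ A₂) (measure_ne_top _ B))).mp hB

lemma map_add_smul_indicator_one_eq_of_measure_eq [IsFiniteMeasure μ] {R : Type*} [Semiring R]
    [MeasurableSpace R] {f : Ω → R} {c : R} {A₁ A₂ : Set Ω} (hA₁ : MeasurableSet A₁)
    (hA₂ : MeasurableSet A₂) (hf : AEMeasurable f μ) (hA₁f : A₁ ⊆ {ω | f ω = c})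
    (hA₂f : A₂ ⊆ {ω | f ω = c}) (hμA : μ A₁ = μ A₂) (ε : R) :
    μ.map (f + ε • A₁.indicator 1) = μ.map (f + ε • A₂.indicator 1) := by
  have on_set {A : Set Ω} (hAf : A ⊆ {ω | f ω = c}) :
      Set.EqOn (f + ε • A.indicator 1) (fun _ ↦ c + ε) A := fun ω hω ↦ by
    simp [hω, show f ω = c from hAf hω]
  have on_compl (A : Set Ω) : Set.EqOn (f + ε • A.indicator 1) f Aᶜ := fun ω hω ↦ by
    simp [Set.indicator_of_notMem hω]
  exact map_eq_map_of_eqOn_of_measure_eq hA₁ hA₂ hf hA₁f hA₂f (on_set hA₁f) (on_set hA₂f)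
    (on_compl A₁) (on_compl A₂) hμA

end MeasureTheory.Measure

theorem gradient_integral_depends_only_on_measure_general
    {Ω : Type*} [MeasurableSpace Ω] (μ : Measure Ω) [IsProbabilityMeasure μ]
    (ξ : Ω → ℝ) (hξ : MemLp ξ 2 μ)
    (x : ℕ → ℝ)
    (F : (Ω → ℝ) → ℝ)
    (hlaw : ∀ ζ ζ' : Ω → ℝ, MemLp ζ 2 μ → MemLp ζ' 2 μ →
      Measure.map ζ μ = Measure.map ζ' μ → F ζ = F ζ')
    (DFξ : Ω → ℝ)
    (hdiff : ∀ η : Ω → ℝ, MemLp η 2 μ →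
      Tendsto (fun ε : ℝ => (F (ξ + ε • η) - F ξ) / ε) (𝓝[≠] 0)
        (𝓝 (∫ ω, DFξ ω * η ω ∂μ))) :
    ∀ i : ℕ, ∀ A₁ A₂ : Set Ω, MeasurableSet A₁ → MeasurableSet A₂ →
      A₁ ⊆ {ω | ξ ω = x i} → A₂ ⊆ {ω | ξ ω = x i} → μ A₁ = μ A₂ →
      ∫ ω in A₁, DFξ ω ∂μ = ∫ ω in A₂, DFξ ω ∂μ := by
  intro i A₁ A₂ hA₁ hA₂ hA₁ξ hA₂ξ hμA
  have hmemLp {A : Set Ω} (hA : MeasurableSet A) : MemLp (A.indicator (1 : Ω → ℝ)) 2 μ :=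
    memLp_indicator_const 2 hA 1 (Or.inr (measure_ne_top μ A))
  have hF (ε : ℝ) : F (ξ + ε • A₁.indicator 1) = F (ξ + ε • A₂.indicator 1) :=
    hlaw _ _ (hξ.add ((hmemLp hA₁).const_smul ε)) (hξ.add ((hmemLp hA₂).const_smul ε))
      (Measure.map_add_smul_indicator_one_eq_of_measure_eq hA₁ hA₂ hξ.aemeasurable hA₁ξ hA₂ξ
        hμA ε)
  have hgrad : ∫ ω, DFξ ω * A₁.indicator 1 ω ∂μ = ∫ ω, DFξ ω * A₂.indicator 1 ω ∂μ :=
    tendsto_nhds_unique ((hdiff _ (hmemLp hA₁)).congr fun ε ↦ by rw [hF])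
      (hdiff _ (hmemLp hA₂))
  simpa only [← Set.indicator_mul_right, Pi.one_apply, mul_one, integral_indicator hA₁,
    integral_indicator hA₂] using hgrad

/-- For a discrete `ξ` and a law-invariant Fréchet differentiable `F`, the quantity
`E[DF(ξ)·1_{A₁}]` depends only on `P(A₁)` among measurable subsets `A₁ ⊆ {ξ = x i}`. -/
theorem gradient_integral_depends_only_on_measure
    {Ω : Type*} [MeasurableSpace Ω] (μ : Measure Ω) [IsProbabilityMeasure μ]
    (hatomless : ∀ s : Set Ω, MeasurableSet s → 0 < μ s →
      ∃ t ⊆ s, MeasurableSet t ∧ 0 < μ t ∧ μ t < μ s)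
    (ξ : Ω → ℝ) (hξ : MemLp ξ 2 μ) (hξm : Measurable ξ)
    (x : ℕ → ℝ) (hx : Function.Injective x)
    (p : ℕ → ℝ≥0∞) (hp : ∀ i, μ {ω | ξ ω = x i} = p i) (hppos : ∀ i, 0 < p i)
    (hdiscrete : ∀ᵐ ω ∂μ, ∃ i, ξ ω = x i)
    (F : (Ω → ℝ) → ℝ)
    (hlaw : ∀ ζ ζ' : Ω → ℝ, MemLp ζ 2 μ → MemLp ζ' 2 μ →
      Measure.map ζ μ = Measure.map ζ' μ → F ζ = F ζ')
    (DFξ : Ω → ℝ) (hDFξ : MemLp DFξ 2 μ)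
    (hdiff : ∀ η : Ω → ℝ, MemLp η 2 μ →
      Tendsto (fun ε : ℝ => (F (ξ + ε • η) - F ξ) / ε) (𝓝[≠] 0)
        (𝓝 (∫ ω, DFξ ω * η ω ∂μ))) :
    ∀ i : ℕ, ∀ A₁ A₂ : Set Ω, MeasurableSet A₁ → MeasurableSet A₂ →
      A₁ ⊆ {ω | ξ ω = x i} → A₂ ⊆ {ω | ξ ω = x i} → μ A₁ = μ A₂ →
      ∫ ω in A₁, DFξ ω ∂μ = ∫ ω in A₂, DFξ ω ∂μ :=
  gradient_integral_depends_only_on_measure_general μ ξ hξ x F hlaw DFξ hdiff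
end
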